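/- arXiv:1403.2620 — 6 statements merged into one kernel-verified Lean document; each statement's English description precedes it below -/
import Mathlib

section
/- Fix λ > 0. Define piecewise constant coefficients on ℝ³ by D̃(x,y,z) = μ̃(x,y,z) = 1 if y ≥ 0 and D̃(x,y,z) = μ̃(x,y,z) = λ if y < 0, and Γ̃(x,y,z) = 1 if y ≥ 0 and Γ̃(x,y,z) = 1/λ if y < 0. Then u(x,y,z) = e^x is a weak solution of −div(D̃ ∇u) + μ̃ u = 0 on ℝ³, i.e. for every continuously differentiable, compactly supported φ : ℝ³ → ℝ one has ∫_{ℝ³} ( D̃(p) ⟨∇u(p), ∇φ(p)⟩ + μ̃(p) u(p) φ(p) ) dp = 0. Moreover the photoacoustic data Γ̃(p) μ̃(p) u(p) equals e^x for every p ∈ ℝ³, independently of λ. Hence the parameter sets (μ, D, Γ) ≡ (1,1,1) and (μ̃, D̃, Γ̃) generate identical photoacoustic data. -/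
open MeasureTheory RealInnerProductSpace

abbrev E3 := EuclideanSpace ℝ (Fin 3)

/-!
Both `D̃ u` and `μ̃ u` equal `c(y) eˣ` with `c = 1` on `{y ≥ 0}` and `c = λ` on `{y < 0}`. This
function is its own derivative in the `x`-direction, so the weak form
`∫ c(y) eˣ ∂ₓφ + c(y) eˣ φ` vanishes by integrating by parts in `x` alone, where the jump of `c`
across `{y = 0}` is invisible. The data is `Γ̃ μ̃ u = eˣ` because `Γ̃ μ̃ ≡ 1`.
-/

section IntegrationByParts

variable {E : Type*} [NormedAddCommGroup E] [NormedSpace ℝ E] [FiniteDimensional ℝ E]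
  [MeasurableSpace E] [BorelSpace E] {μ : Measure E} [μ.IsAddHaarMeasure]

theorem integral_mul_fderiv_add_mul_eq_zero_of_hasLineDerivAt {f f' φ : E → ℝ} {v : E}
    (hf : LocallyIntegrable f μ) (hf' : LocallyIntegrable f' μ)
    (hfv : ∀ x, HasLineDerivAt ℝ f (f' x) x v)
    (hφ : ContDiff ℝ 1 φ) (hφc : HasCompactSupport φ) :
    ∫ x, (f x * fderiv ℝ φ x v + f' x * φ x) ∂μ = 0 := by
  have hφ' : Continuous fun x ↦ fderiv ℝ φ x v :=
    (hφ.continuous_fderiv one_ne_zero).clm_apply continuous_const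
  have hfφ' : Integrable (fun x ↦ f x * fderiv ℝ φ x v) μ :=
    hf.integrable_smul_right_of_hasCompactSupport hφ' (hφc.fderiv_apply (𝕜 := ℝ) v)
  have hf'φ : Integrable (fun x ↦ f' x * φ x) μ :=
    hf'.integrable_smul_right_of_hasCompactSupport hφ.continuous hφc
  have hfφ : Integrable (fun x ↦ f x * φ x) μ :=
    hf.integrable_smul_right_of_hasCompactSupport hφ.continuous hφc
  have parts : ∫ x, f x * fderiv ℝ φ x v ∂μ = -∫ x, f' x * φ x ∂μ :=
    integral_bilinear_hasLineDerivAt_right_eq_neg_left_of_integrable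
      (B := ContinuousLinearMap.mul ℝ ℝ) hf'φ hfφ' hfφ (fun x _ ↦ hfv x)
      (fun x _ ↦ ((hφ.differentiable one_ne_zero x).hasFDerivAt.hasLineDerivAt v))
  rw [integral_add hfφ' hf'φ, parts, neg_add_cancel]

end IntegrationByParts

section Coordinates

variable {ι : Type*}

theorem EuclideanSpace.hasGradientAt_comp_apply [Fintype ι] [DecidableEq ι] {g : ℝ → ℝ}
    {g' : ℝ} {p : EuclideanSpace ℝ ι} (i : ι) (hg : HasDerivAt g g' (p i)) :
    HasGradientAt (fun q : EuclideanSpace ℝ ι ↦ g (q i)) (g' • EuclideanSpace.single i 1) p := by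
  have hdual : InnerProductSpace.toDual ℝ _ (g' • EuclideanSpace.single i 1) =
      g' • (EuclideanSpace.proj i : EuclideanSpace ℝ ι →L[ℝ] ℝ) := by
    ext q
    simp [EuclideanSpace.inner_single_left]
  rw [hasGradientAt_iff_hasFDerivAt, hdual]
  exact hg.comp_hasFDerivAt p (EuclideanSpace.proj i : EuclideanSpace ℝ ι →L[ℝ] ℝ).hasFDerivAt

theorem EuclideanSpace.hasLineDerivAt_mul_exp_single [DecidableEq ι] (c : ℝ → ℝ) {i j : ι}
    (hij : i ≠ j) (p : EuclideanSpace ℝ ι) :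
    HasLineDerivAt ℝ (fun q : EuclideanSpace ℝ ι ↦ c (q j) * Real.exp (q i))
      (c (p j) * Real.exp (p i)) p (EuclideanSpace.single i 1) := by
  have h := ((Real.hasDerivAt_exp (p i + 0)).comp 0 ((hasDerivAt_id 0).const_add (p i))).const_mul
    (c (p j))
  simpa [HasLineDerivAt, hij.symm, Function.comp_def] using h

theorem EuclideanSpace.locallyIntegrable_mul_exp [Fintype ι] {μ : Measure (EuclideanSpace ℝ ι)}
    [IsLocallyFiniteMeasure μ] {c : ℝ → ℝ} (hc : Measurable c) {C : ℝ} (hC : ∀ t, |c t| ≤ C)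
    (i j : ι) : LocallyIntegrable (fun q : EuclideanSpace ℝ ι ↦ c (q j) * Real.exp (q i)) μ := by
  have hexp : Continuous fun q : EuclideanSpace ℝ ι ↦ Real.exp (q i) := by fun_prop
  refine (hexp.const_mul C).locallyIntegrable.mono ?_ (Filter.Eventually.of_forall fun q ↦ ?_)
  · exact ((hc.comp (EuclideanSpace.proj j).continuous.measurable).mul
      hexp.measurable).aestronglyMeasurable
  · have hCq := hC (q j)
    simp only [norm_mul, Real.norm_eq_abs, Real.abs_exp]
    exact mul_le_mul_of_nonneg_right (hCq.trans (le_abs_self C)) (Real.exp_pos _).le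

end Coordinates

/-- for any `λ > 0`, the piecewise constant parameters
`D̃ = μ̃ = 1` on `{y ≥ 0}`, `= λ` on `{y < 0}` and `Γ̃ = 1` on `{y ≥ 0}`, `= 1/λ` on `{y < 0}`
admit `u(x,y,z) = e^x` as a weak solution of `−div(D̃∇u) + μ̃u = 0` on `ℝ³`, and the
photoacoustic data `Γ̃μ̃u` equals `e^x = 1·1·u`, i.e. the same data as `(μ,D,Γ) ≡ (1,1,1)`. -/
theorem stmt0 (lam : ℝ) (hlam : 0 < lam)
    (u Dt muT Gt : E3 → ℝ)
    (hu : ∀ p : E3, u p = Real.exp (p 0))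
    (hD : ∀ p : E3, Dt p = if 0 ≤ p 1 then 1 else lam)
    (hmu : ∀ p : E3, muT p = if 0 ≤ p 1 then 1 else lam)
    (hG : ∀ p : E3, Gt p = if 0 ≤ p 1 then 1 else 1 / lam) :
    (∀ φ : E3 → ℝ, ContDiff ℝ 1 φ → HasCompactSupport φ →
      ∫ p : E3, (Dt p * ⟪gradient u p, gradient φ p⟫ + muT p * u p * φ p) = 0)
    ∧ (∀ p : E3, Gt p * muT p * u p = Real.exp (p 0))
    ∧ (∀ p : E3, Gt p * muT p * u p = (1 : ℝ) * 1 * u p) := by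
  obtain rfl : u = fun p ↦ Real.exp (p 0) := funext hu
  obtain rfl : Dt = fun p ↦ if 0 ≤ p 1 then 1 else lam := funext hD
  obtain rfl : muT = fun p ↦ if 0 ≤ p 1 then 1 else lam := funext hmu
  obtain rfl : Gt = fun p ↦ if 0 ≤ p 1 then 1 else 1 / lam := funext hG
  have hdata (p : E3) : (if 0 ≤ p 1 then 1 else 1 / lam) * (if 0 ≤ p 1 then 1 else lam) *
      Real.exp (p 0) = Real.exp (p 0) := by
    split_ifs <;> field_simp
  refine ⟨fun φ hφ hφc ↦ ?_, hdata, fun p ↦ by simp only [hdata, one_mul]⟩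
  set c : ℝ → ℝ := fun t ↦ if 0 ≤ t then 1 else lam
  have hc : Measurable c := measurable_const.piecewise measurableSet_Ici measurable_const
  have hc_bdd (t : ℝ) : |c t| ≤ max 1 |lam| := by
    simp only [c]
    split_ifs <;> simp
  have hf := EuclideanSpace.locallyIntegrable_mul_exp (μ := volume) hc hc_bdd (0 : Fin 3) 1
  have hweak := integral_mul_fderiv_add_mul_eq_zero_of_hasLineDerivAt hf hf
    (EuclideanSpace.hasLineDerivAt_mul_exp_single c (by decide)) hφ hφc
  refine (integral_congr_ae (Filter.Eventually.of_forall fun p ↦ ?_)).trans hweak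
  rw [(EuclideanSpace.hasGradientAt_comp_apply 0 (Real.hasDerivAt_exp (p 0))).gradient,
    real_inner_smul_left, inner_gradient_right, conj_trivial]
  ring
end

section
/- Let μ_m, D_m, Γ_m, μ_n, D_n, Γ_n be positive real constants, let u_m, u_n : ℝ³ → ℝ be functions, and set H_m = Γ_m μ_m u_m and H_n = Γ_n μ_n u_n. Then: (i) if y ∈ ℝ³ satisfies u_m(y) = u_n(y) and u_n(y) ≠ 0, then Γ_m μ_m = (H_m(y)/H_n(y)) · Γ_n μ_n; (ii) if x ∈ ℝ³ is a point where u_m and u_n are differentiable, ν ∈ ℝ³ is a unit vector with D_m ⟨∇u_m(x), ν⟩ = D_n ⟨∇u_n(x), ν⟩ and ⟨∇u_n(x), ν⟩ ≠ 0, then D_m/(Γ_m μ_m) = (⟨∇H_n(x), ν⟩/⟨∇H_m(x), ν⟩) · D_n/(Γ_n μ_n); (iii) if z ∈ ℝ³ is a point where u_m is twice differentiable with D_m Δu_m(z) = μ_m u_m(z) and u_m(z) ≠ 0, then μ_m/D_m = ΔH_m(z)/H_m(z). Consequently, setting A = Γ_m μ_m, B = D_m/(Γ_m μ_m), C = μ_m/D_m,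 the triple (μ_m, D_m, Γ_m) equals (A·B·C, A·B, 1/(B·C)) and is uniquely determined by the values of H_m, H_n, their gradients and Laplacians at y, x, z together with the reference values (μ_n, D_n, Γ_n). -/
/-!
Since `H = Γ μ u` is a constant multiple of `u`, its gradient and Laplacian are the same constant
multiples of those of `u` (no regularity is needed for this: a non-differentiable function has
zero derivative on both sides). Each identity then reduces to field arithmetic with the
interface and interior equations.
-/

open RealInnerProductSpace

/-- The Laplacian: the sum of the second partial derivatives. -/
noncomputable def lap (u : E3 → ℝ) (p : E3) : ℝ :=
  ∑ i : Fin 3, fderiv ℝ (fun q => fderiv ℝ u q (EuclideanSpace.single i 1)) p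
    (EuclideanSpace.single i 1)

lemma fderiv_fun_const_mul_field {𝕜 E : Type*} [NontriviallyNormedField 𝕜] [NormedAddCommGroup E]
    [NormedSpace 𝕜 E] (c : 𝕜) (f : E → 𝕜) :
    fderiv 𝕜 (fun p => c * f p) = c • fderiv 𝕜 f :=
  fderiv_const_smul_field (f := f) c

section ConstMul

variable {F : Type*} [NormedAddCommGroup F] [InnerProductSpace ℝ F] [CompleteSpace F]

lemma gradient_fun_const_mul (c : ℝ) (f : F → ℝ) (x : F) :
    gradient (fun p => c * f p) x = c • gradient f x := by
  simp [gradient, fderiv_fun_const_mul_field]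

lemma inner_gradient_fun_const_mul (c : ℝ) (f : F → ℝ) (x v : F) :
    ⟪gradient (fun p => c * f p) x, v⟫ = c * ⟪gradient f x, v⟫ := by
  rw [gradient_fun_const_mul, real_inner_smul_left]

end ConstMul

lemma lap_fun_const_mul (c : ℝ) (u : E3 → ℝ) (z : E3) :
    lap (fun p => c * u p) z = c * lap u z := by
  simp only [lap, fderiv_fun_const_mul_field, Pi.smul_apply, smul_apply,
    smul_eq_mul, Finset.mul_sum]

/-- core step of Proposition 3.2, equations (14)–(17): with
`H_m = Γ_m μ_m u_m` and `H_n = Γ_n μ_n u_n`,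
(i) continuity `u_m(y) = u_n(y) ≠ 0` gives `Γ_m μ_m = (H_m(y)/H_n(y)) Γ_n μ_n`;
(ii) the transmission condition at a point of non-tangential gradient gives
`D_m/(Γ_m μ_m) = (⟨∇H_n, ν⟩/⟨∇H_m, ν⟩) · D_n/(Γ_n μ_n)`;
(iii) the equation `D_m Δu_m = μ_m u_m` gives `μ_m/D_m = ΔH_m/H_m`;
and `(μ_m, D_m, Γ_m) = (A·B·C, A·B, 1/(B·C))` for `A = Γ_m μ_m`, `B = D_m/(Γ_m μ_m)`,
`C = μ_m/D_m`. -/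
theorem stmt6 (mum Dm Γm mun Dn Γn : ℝ)
    (hmum : 0 < mum) (hDm : 0 < Dm) (hΓm : 0 < Γm)
    (hmun : 0 < mun) (hDn : 0 < Dn) (hΓn : 0 < Γn)
    (um un : E3 → ℝ)
    (Hm Hn : E3 → ℝ)
    (hHm : ∀ p : E3, Hm p = Γm * mum * um p)
    (hHn : ∀ p : E3, Hn p = Γn * mun * un p) :
    (∀ y : E3, um y = un y → un y ≠ 0 →
      Γm * mum = (Hm y / Hn y) * (Γn * mun)) ∧
    (∀ (x : E3) (ν : E3), ‖ν‖ = 1 →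
      DifferentiableAt ℝ um x → DifferentiableAt ℝ un x →
      Dm * ⟪gradient um x, ν⟫ = Dn * ⟪gradient un x, ν⟫ →
      ⟪gradient un x, ν⟫ ≠ 0 →
      Dm / (Γm * mum) = (⟪gradient Hn x, ν⟫ / ⟪gradient Hm x, ν⟫) * (Dn / (Γn * mun))) ∧
    (∀ z : E3, DifferentiableAt ℝ um z → DifferentiableAt ℝ (fderiv ℝ um) z →
      Dm * lap um z = mum * um z → um z ≠ 0 →
      mum / Dm = lap Hm z / Hm z) ∧
    (mum = (Γm * mum) * (Dm / (Γm * mum)) * (mum / Dm) ∧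
      Dm = (Γm * mum) * (Dm / (Γm * mum)) ∧
      Γm = 1 / ((Dm / (Γm * mum)) * (mum / Dm))) := by
  obtain rfl : Hm = fun p => Γm * mum * um p := funext hHm
  obtain rfl : Hn = fun p => Γn * mun * un p := funext hHn
  refine ⟨fun y hy hny => ?_, fun x ν _ _ _ htr hnt => ?_, fun z _ _ heq hnz => ?_, ?_, ?_, ?_⟩
  · dsimp only
    rw [hy]
    field_simp
  · have hm : ⟪gradient um x, ν⟫ ≠ 0 := fun h => hnt (by simpa [h, hDn.ne'] using htr.symm)
    rw [inner_gradient_fun_const_mul, inner_gradient_fun_const_mul]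
    field_simp
    linear_combination htr
  · rw [lap_fun_const_mul]
    field_simp
    exact heq.symm
  all_goals field_simp
end

section
/- Let Ω ⊆ ℝ³ be a nonempty open set and let μ, μ̃, D, Γ be positive real constants. Let u, ũ : Ω → ℝ be twice differentiable with u(p) > 0 and ũ(p) > 0 for all p ∈ Ω. Suppose D Δu = μ u and D Δũ = μ̃ ũ at every point of Ω, and Γ μ u = Γ μ̃ ũ at every point of Ω (the two parameter sets (μ, D, Γ) and (μ̃, D, Γ) produce the same photoacoustic data). Then μ = μ̃ and u = ũ on Ω. -/
theorem Filter.EventuallyEq.lap_eq {f g : E3 → ℝ} {p : E3} (h : f =ᶠ[nhds p] g) :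
    lap f p = lap g p := by
  refine Finset.sum_congr rfl fun i _ => ?_
  have h' : (fun q => fderiv ℝ f q (EuclideanSpace.single i 1)) =ᶠ[nhds p]
      fun q => fderiv ℝ g q (EuclideanSpace.single i 1) :=
    (h.fderiv (𝕜 := ℝ)).mono fun q hq => by simp only [hq]
  rw [h'.fderiv_eq]

/- No differentiability is needed: for `c ≠ 0`, `c • f` is differentiable exactly where `f` is. -/
theorem lap_const_mul (c : ℝ) (f : E3 → ℝ) (p : E3) :
    lap (fun q => c * f q) p = c * lap f p := by
  rw [lap, lap, Finset.mul_sum]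
  refine Finset.sum_congr rfl fun i _ => ?_
  rw [show (fun q => c * f q) = c • f from rfl, fderiv_const_smul_field]
  exact congrArg (fun L => L p (EuclideanSpace.single i 1))
    (fderiv_const_smul_field (𝕜 := ℝ) (f := fun q => fderiv ℝ f q (EuclideanSpace.single i 1)) c)

theorem mul_lap_eq_of_eqOn {Ω : Set E3} (hΩ : IsOpen Ω) {a b : ℝ} {f g : E3 → ℝ}
    (h : ∀ q ∈ Ω, a * f q = b * g q) {p : E3} (hp : p ∈ Ω) : a * lap f p = b * lap g p := by
  rw [← lap_const_mul, ← lap_const_mul]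
  exact Filter.EventuallyEq.lap_eq (Filter.eventually_of_mem (hΩ.mem_nhds hp) h)

theorem stmt8_general (Ω : Set E3) (hΩ : IsOpen Ω) (hne : Ω.Nonempty)
    (mu muT D Γ : ℝ) (hmu : 0 < mu) (hΓ : 0 < Γ)
    (u ut : E3 → ℝ)
    (hpos : ∀ p ∈ Ω, 0 < u p)
    (heq : ∀ p ∈ Ω, D * lap u p = mu * u p)
    (heqt : ∀ p ∈ Ω, D * lap ut p = muT * ut p)
    (hdata : ∀ p ∈ Ω, Γ * mu * u p = Γ * muT * ut p) :
    mu = muT ∧ (∀ p ∈ Ω, u p = ut p) := by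
  have hdata' : ∀ p ∈ Ω, mu * u p = muT * ut p := fun p hp =>
    mul_left_cancel₀ hΓ.ne' (by simpa only [mul_assoc] using hdata p hp)
  have hmu_eq : mu = muT := by
    obtain ⟨p, hp⟩ := hne
    have hlap := mul_lap_eq_of_eqOn hΩ hdata' hp
    have hsq : mu * (mu * u p) = muT * (mu * u p) := by
      linear_combination (-mu) * heq p hp + D * hlap + muT * heqt p hp - muT * hdata' p hp
    exact mul_right_cancel₀ (mul_pos hmu (hpos p hp)).ne' hsq
  subst hmu_eq
  exact ⟨rfl, fun p hp => mul_left_cancel₀ hmu.ne' (hdata' p hp)⟩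

/-- uniqueness in Proposition 3.3, pair `(D, Γ)` known: if two twice
differentiable positive fluences `u, ũ` on a nonempty open `Ω` satisfy `D Δu = μ u`,
`D Δũ = μ̃ ũ` and produce the same data `Γμu = Γμ̃ũ`, then `μ = μ̃` and `u = ũ`. -/
theorem stmt8 (Ω : Set E3) (hΩ : IsOpen Ω) (hne : Ω.Nonempty)
    (mu muT D Γ : ℝ) (hmu : 0 < mu) (hmuT : 0 < muT) (hD : 0 < D) (hΓ : 0 < Γ)
    (u ut : E3 → ℝ)
    (hdiff : ∀ p ∈ Ω, DifferentiableAt ℝ u p ∧ DifferentiableAt ℝ (fderiv ℝ u) p)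
    (hdifft : ∀ p ∈ Ω, DifferentiableAt ℝ ut p ∧ DifferentiableAt ℝ (fderiv ℝ ut) p)
    (hpos : ∀ p ∈ Ω, 0 < u p) (hposT : ∀ p ∈ Ω, 0 < ut p)
    (heq : ∀ p ∈ Ω, D * lap u p = mu * u p)
    (heqt : ∀ p ∈ Ω, D * lap ut p = muT * ut p)
    (hdata : ∀ p ∈ Ω, Γ * mu * u p = Γ * muT * ut p) :
    mu = muT ∧ (∀ p ∈ Ω, u p = ut p) :=
  stmt8_general Ω hΩ hne mu muT D Γ hmu hΓ u ut hpos heq heqt hdata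
end

section
/- Let v, w ∈ ℝ³ with v ≠ 0, let ν ∈ ℝ³ be a unit vector, and let D_m ≥ D_n > 0. Suppose v − ⟨v, ν⟩ν = w − ⟨w, ν⟩ν and D_m ⟨v, ν⟩ = D_n ⟨w, ν⟩. Let c ∈ [0,1] satisfy ⟨v, ν⟩²/‖v‖² ≥ c. Then w ≠ 0 and |log‖w‖ − log‖v‖| ≥ (1/2)·log( 1 + ( e^{2·|log D_m − log D_n|} − 1 )·c ) ≥ 0. -/
open RealInnerProductSpace

/-!
Write `k = D_m / D_n ≥ 1`. Both vectors have the same tangential part and `⟨w, ν⟩ = k ⟨v, ν⟩`,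
so Pythagoras gives `‖w‖² = ‖v‖² + (k² - 1) ⟨v, ν⟩² ≥ ‖v‖² (1 + (k² - 1) c)`. Since
`e^{2 |log D_m - log D_n|} = k²`, taking logarithms yields the bound.
-/

section TangentialPart

variable {F : Type*} [NormedAddCommGroup F] [InnerProductSpace ℝ F]

theorem norm_sq_eq_norm_sub_inner_smul_sq_add_inner_sq {ν : F} (hν : ‖ν‖ = 1) (u : F) :
    ‖u‖ ^ 2 = ‖u - ⟪u, ν⟫ • ν‖ ^ 2 + ⟪u, ν⟫ ^ 2 := by
  have hνν : ⟪ν, ν⟫ = 1 := by rw [real_inner_self_eq_norm_sq, hν, one_pow]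
  have horth : ⟪u - ⟪u, ν⟫ • ν, ⟪u, ν⟫ • ν⟫ = 0 := by
    rw [inner_sub_left, real_inner_smul_right, real_inner_smul_left, real_inner_smul_right, hνν]
    ring
  have hpyth := norm_add_sq_eq_norm_sq_add_norm_sq_real horth
  rw [sub_add_cancel, norm_smul, hν, mul_one, Real.norm_eq_abs, abs_mul_abs_self] at hpyth
  rw [sq, sq, sq, hpyth]

theorem norm_sq_eq_of_tangential_eq_of_inner_eq_mul {v w ν : F} (hν : ‖ν‖ = 1) {k : ℝ}
    (htang : v - ⟪v, ν⟫ • ν = w - ⟪w, ν⟫ • ν) (hnormal : ⟪w, ν⟫ = k * ⟪v, ν⟫) :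
    ‖w‖ ^ 2 = ‖v‖ ^ 2 + (k ^ 2 - 1) * ⟪v, ν⟫ ^ 2 := by
  rw [norm_sq_eq_norm_sub_inner_smul_sq_add_inner_sq hν w,
    norm_sq_eq_norm_sub_inner_smul_sq_add_inner_sq hν v, htang, hnormal]
  ring

end TangentialPart

theorem Real.exp_two_mul_abs_log_sub_log {a b : ℝ} (hb : 0 < b) (hba : b ≤ a) :
    Real.exp (2 * |Real.log a - Real.log b|) = (a / b) ^ 2 := by
  have ha : 0 < a := hb.trans_le hba
  rw [← Real.log_div ha.ne' hb.ne',
    abs_of_nonneg (Real.log_nonneg ((one_le_div hb).mpr hba)), mul_comm,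
    Real.exp_mul, Real.exp_log (div_pos ha hb), Real.rpow_two]

theorem Real.half_log_one_add_le_abs_log_sub_log {a b s : ℝ} (ha : 0 < a) (hs : 0 ≤ s)
    (h : a ^ 2 * (1 + s) ≤ b ^ 2) :
    1 / 2 * Real.log (1 + s) ≤ |Real.log b - Real.log a| := by
  have hb : b ≠ 0 := by
    rintro rfl
    nlinarith [pow_pos ha 2]
  have hlog := Real.log_le_log (by positivity) h
  rw [Real.log_mul (by positivity) (by positivity), Real.log_pow, Real.log_pow] at hlog
  push_cast at hlog
  linarith [le_abs_self (Real.log b - Real.log a)]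

theorem stmt13_general (v w ν : E3) (hv : v ≠ 0) (hν : ‖ν‖ = 1)
    (Dm Dn : ℝ) (hDn : 0 < Dn) (hDmn : Dn ≤ Dm)
    (htang : v - ⟪v, ν⟫ • ν = w - ⟪w, ν⟫ • ν)
    (htrans : Dm * ⟪v, ν⟫ = Dn * ⟪w, ν⟫)
    (c : ℝ) (hc0 : 0 ≤ c)
    (hc : c ≤ ⟪v, ν⟫ ^ 2 / ‖v‖ ^ 2) :
    w ≠ 0 ∧
    (1 / 2) * Real.log (1 + (Real.exp (2 * |Real.log Dm - Real.log Dn|) - 1) * c)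
      ≤ |Real.log ‖w‖ - Real.log ‖v‖| ∧
    0 ≤ (1 / 2) * Real.log (1 + (Real.exp (2 * |Real.log Dm - Real.log Dn|) - 1) * c) := by
  have hvpos : 0 < ‖v‖ := norm_pos_iff.mpr hv
  have hnormal : ⟪w, ν⟫ = Dm / Dn * ⟪v, ν⟫ := by
    field_simp
    linarith
  have hk : 0 ≤ (Dm / Dn) ^ 2 - 1 := by
    nlinarith [(one_le_div hDn).mpr hDmn]
  have hs : 0 ≤ ((Dm / Dn) ^ 2 - 1) * c := mul_nonneg hk hc0
  have hbound : ‖v‖ ^ 2 * (1 + ((Dm / Dn) ^ 2 - 1) * c) ≤ ‖w‖ ^ 2 := by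
    have hcv : c * ‖v‖ ^ 2 ≤ ⟪v, ν⟫ ^ 2 := (le_div_iff₀ (by positivity)).mp hc
    rw [norm_sq_eq_of_tangential_eq_of_inner_eq_mul hν htang hnormal]
    nlinarith [mul_le_mul_of_nonneg_left hcv hk]
  rw [Real.exp_two_mul_abs_log_sub_log hDn hDmn]
  refine ⟨?_, Real.half_log_one_add_le_abs_log_sub_log hvpos hs hbound, ?_⟩
  · rintro rfl
    rw [norm_zero] at hbound
    nlinarith [pow_pos hvpos 2]
  · have := Real.log_nonneg (le_add_of_nonneg_right hs)
    positivity

/-- lower bound `γ(|log D_m − log D_n|)` of Section 4.1: under agreement of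
tangential components, the transmission condition, `D_m ≥ D_n > 0`, `v ≠ 0` and
`⟨v,ν⟩²/‖v‖² ≥ c` with `c ∈ [0,1]`, one has `w ≠ 0` and
`|log‖w‖ − log‖v‖| ≥ ½ log(1 + (e^{2|log D_m − log D_n|} − 1)c) ≥ 0`. -/
theorem stmt13 (v w ν : E3) (hv : v ≠ 0) (hν : ‖ν‖ = 1)
    (Dm Dn : ℝ) (hDn : 0 < Dn) (hDmn : Dn ≤ Dm)
    (htang : v - ⟪v, ν⟫ • ν = w - ⟪w, ν⟫ • ν)
    (htrans : Dm * ⟪v, ν⟫ = Dn * ⟪w, ν⟫)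
    (c : ℝ) (hc0 : 0 ≤ c) (hc1 : c ≤ 1)
    (hc : c ≤ ⟪v, ν⟫ ^ 2 / ‖v‖ ^ 2) :
    w ≠ 0 ∧
    (1 / 2) * Real.log (1 + (Real.exp (2 * |Real.log Dm - Real.log Dn|) - 1) * c)
      ≤ |Real.log ‖w‖ - Real.log ‖v‖| ∧
    0 ≤ (1 / 2) * Real.log (1 + (Real.exp (2 * |Real.log Dm - Real.log Dn|) - 1) * c) :=
  stmt13_general v w ν hv hν Dm Dn hDn hDmn htang htrans c hc0 hc
end

section
/- Let v, w ∈ ℝ³ with v ≠ 0, let ν ∈ ℝ³ be a unit vector, and let D_m ≥ D_n > 0. Suppose v − ⟨v, ν⟩ν = w − ⟨w, ν⟩ν and D_m ⟨v, ν⟩ = D_n ⟨w, ν⟩, and let c ∈ [0,1] satisfy ⟨v, ν⟩²/‖v‖² ≥ c. Let a_m, a_n > 0. Then | log(a_n·‖w‖) − log(a_m·‖v‖) | ≥ (1/2)·log( 1 + ( e^{2·|log D_m − log D_n|} − 1 )·c ) − |log a_n − log a_m|. -/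
/-!
Split each gradient into its tangential part and its normal component along `ν`. The tangential
parts agree, and the flux condition scales the normal component by `r = D_m / D_n ≥ 1`, so
`‖w‖² = ‖v‖² + (r² - 1)⟪v, ν⟫² ≥ ‖v‖² (1 + (r² - 1) c)`. Taking logarithms gives
`log ‖w‖ - log ‖v‖ ≥ γ(|log D_m - log D_n|)`, since `e^{2 |log D_m - log D_n|} = r²`, and the
factors `a_m, a_n` cost at most `|log a_n - log a_m|` by the reverse triangle inequality.
-/

open RealInnerProductSpace

section InterfaceJump

variable {F : Type*} [NormedAddCommGroup F] [InnerProductSpace ℝ F] {ν v w : F}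

theorem norm_sub_inner_smul_sq_of_norm_eq_one (hν : ‖ν‖ = 1) (x : F) :
    ‖x - ⟪x, ν⟫ • ν‖ ^ 2 = ‖x‖ ^ 2 - ⟪x, ν⟫ ^ 2 := by
  rw [norm_sub_sq_real, norm_smul, real_inner_smul_right, hν, Real.norm_eq_abs, mul_one, sq_abs]
  ring

theorem sq_norm_eq_of_tangential_eq (hν : ‖ν‖ = 1)
    (htang : v - ⟪v, ν⟫ • ν = w - ⟪w, ν⟫ • ν) :
    ‖w‖ ^ 2 = ‖v‖ ^ 2 + (⟪w, ν⟫ ^ 2 - ⟪v, ν⟫ ^ 2) := by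
  have h := congrArg (‖·‖ ^ 2) htang
  simp only [norm_sub_inner_smul_sq_of_norm_eq_one hν] at h
  linarith

variable {Dm Dn : ℝ}

theorem sq_div_sub_one_nonneg (hDn : 0 < Dn) (hDmn : Dn ≤ Dm) : 0 ≤ (Dm / Dn) ^ 2 - 1 :=
  sub_nonneg.mpr (one_le_pow₀ ((one_le_div hDn).mpr hDmn))

theorem sq_norm_mul_le_sq_norm_of_interface (hν : ‖ν‖ = 1) (hDn : 0 < Dn) (hDmn : Dn ≤ Dm)
    (htang : v - ⟪v, ν⟫ • ν = w - ⟪w, ν⟫ • ν) (htrans : Dm * ⟪v, ν⟫ = Dn * ⟪w, ν⟫)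
    {c : ℝ} (hc : c * ‖v‖ ^ 2 ≤ ⟪v, ν⟫ ^ 2) :
    ‖v‖ ^ 2 * (1 + ((Dm / Dn) ^ 2 - 1) * c) ≤ ‖w‖ ^ 2 := by
  have hnormal : ⟪w, ν⟫ = Dm / Dn * ⟪v, ν⟫ := by
    field_simp
    linarith
  have hr := sq_div_sub_one_nonneg hDn hDmn
  rw [sq_norm_eq_of_tangential_eq hν htang, hnormal]
  nlinarith [mul_le_mul_of_nonneg_left hc hr]

theorem norm_le_norm_of_interface (hν : ‖ν‖ = 1) (hDn : 0 < Dn) (hDmn : Dn ≤ Dm)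
    (htang : v - ⟪v, ν⟫ • ν = w - ⟪w, ν⟫ • ν) (htrans : Dm * ⟪v, ν⟫ = Dn * ⟪w, ν⟫) :
    ‖v‖ ≤ ‖w‖ := by
  have h := sq_norm_mul_le_sq_norm_of_interface hν hDn hDmn htang htrans
    (c := 0) (by simpa using sq_nonneg ⟪v, ν⟫)
  rw [mul_zero, add_zero, mul_one] at h
  exact pow_le_pow_iff_left₀ (norm_nonneg _) (norm_nonneg _) two_ne_zero |>.mp h

theorem exp_two_mul_abs_log_sub_log (hDn : 0 < Dn) (hDmn : Dn ≤ Dm) :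
    Real.exp (2 * |Real.log Dm - Real.log Dn|) = (Dm / Dn) ^ 2 := by
  have hDm : 0 < Dm := hDn.trans_le hDmn
  rw [abs_of_nonneg (sub_nonneg.mpr (Real.log_le_log hDn hDmn)),
    ← Real.log_div hDm.ne' hDn.ne', mul_comm, Real.exp_mul, Real.exp_log (by positivity),
    Real.rpow_two]

theorem half_log_le_log_norm_sub_log_norm_of_interface (hv : v ≠ 0) (hν : ‖ν‖ = 1)
    (hDn : 0 < Dn) (hDmn : Dn ≤ Dm)
    (htang : v - ⟪v, ν⟫ • ν = w - ⟪w, ν⟫ • ν) (htrans : Dm * ⟪v, ν⟫ = Dn * ⟪w, ν⟫)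
    {c : ℝ} (hc0 : 0 ≤ c) (hc : c ≤ ⟪v, ν⟫ ^ 2 / ‖v‖ ^ 2) :
    (1 / 2) * Real.log (1 + (Real.exp (2 * |Real.log Dm - Real.log Dn|) - 1) * c)
      ≤ Real.log ‖w‖ - Real.log ‖v‖ := by
  have hv0 : 0 < ‖v‖ := norm_pos_iff.mpr hv
  have hq : 0 < 1 + ((Dm / Dn) ^ 2 - 1) * c :=
    add_pos_of_pos_of_nonneg one_pos (mul_nonneg (sq_div_sub_one_nonneg hDn hDmn) hc0)
  have hsq := sq_norm_mul_le_sq_norm_of_interface hν hDn hDmn htang htrans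
    ((le_div_iff₀ (by positivity)).mp hc)
  have hlog := Real.log_le_log (mul_pos (pow_pos hv0 2) hq) hsq
  rw [Real.log_mul (pow_pos hv0 2).ne' hq.ne', Real.log_pow, Real.log_pow] at hlog
  rw [exp_two_mul_abs_log_sub_log hDn hDmn]
  push_cast at hlog
  linarith

end InterfaceJump

theorem sub_abs_log_sub_le_abs_log_mul_sub_log_mul {γ a b x y : ℝ} (ha : a ≠ 0) (hb : b ≠ 0)
    (hx : x ≠ 0) (hy : y ≠ 0) (h : γ ≤ Real.log x - Real.log y) :
    γ - |Real.log b - Real.log a| ≤ |Real.log (b * x) - Real.log (a * y)| := by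
  rw [Real.log_mul hb hx, Real.log_mul ha hy]
  calc γ - |Real.log b - Real.log a|
      ≤ |Real.log x - Real.log y| - |-(Real.log b - Real.log a)| := by
        rw [abs_neg]; gcongr; exact h.trans (le_abs_self _)
    _ ≤ |Real.log x - Real.log y - -(Real.log b - Real.log a)| := abs_sub_abs_le_abs_sub _ _
    _ = |Real.log b + Real.log x - (Real.log a + Real.log y)| := by ring_nf

theorem stmt14_general (v w ν : E3) (hv : v ≠ 0) (hν : ‖ν‖ = 1)
    (Dm Dn : ℝ) (hDn : 0 < Dn) (hDmn : Dn ≤ Dm)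
    (htang : v - ⟪v, ν⟫ • ν = w - ⟪w, ν⟫ • ν)
    (htrans : Dm * ⟪v, ν⟫ = Dn * ⟪w, ν⟫)
    (c : ℝ) (hc0 : 0 ≤ c)
    (hc : c ≤ ⟪v, ν⟫ ^ 2 / ‖v‖ ^ 2)
    (am an : ℝ) (ham : 0 < am) (han : 0 < an) :
    (1 / 2) * Real.log (1 + (Real.exp (2 * |Real.log Dm - Real.log Dn|) - 1) * c)
        - |Real.log an - Real.log am|
      ≤ |Real.log (an * ‖w‖) - Real.log (am * ‖v‖)| := by
  have hv0 : 0 < ‖v‖ := norm_pos_iff.mpr hv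
  have hw0 : 0 < ‖w‖ := hv0.trans_le (norm_le_norm_of_interface hν hDn hDmn htang htrans)
  exact sub_abs_log_sub_le_abs_log_mul_sub_log_mul ham.ne' han.ne' hw0.ne' hv0.ne'
    (half_log_le_log_norm_sub_log_norm_of_interface hv hν hDn hDmn htang htrans hc0 hc)

/-- inequality (jump_D) of Section 4.1: under the hypotheses of the
gradient-jump bound and with positive factors `a_m, a_n` (representing `Γ_m μ_m, Γ_n μ_n`),
`|log(a_n‖w‖) − log(a_m‖v‖)| ≥ ½ log(1 + (e^{2|log D_m − log D_n|} − 1)c) − |log a_n − log a_m|`. -/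
theorem stmt14 (v w ν : E3) (hv : v ≠ 0) (hν : ‖ν‖ = 1)
    (Dm Dn : ℝ) (hDn : 0 < Dn) (hDmn : Dn ≤ Dm)
    (htang : v - ⟪v, ν⟫ • ν = w - ⟪w, ν⟫ • ν)
    (htrans : Dm * ⟪v, ν⟫ = Dn * ⟪w, ν⟫)
    (c : ℝ) (hc0 : 0 ≤ c) (hc1 : c ≤ 1)
    (hc : c ≤ ⟪v, ν⟫ ^ 2 / ‖v‖ ^ 2)
    (am an : ℝ) (ham : 0 < am) (han : 0 < an) :
    (1 / 2) * Real.log (1 + (Real.exp (2 * |Real.log Dm - Real.log Dn|) - 1) * c)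
        - |Real.log an - Real.log am|
      ≤ |Real.log (an * ‖w‖) - Real.log (am * ‖v‖)| :=
  stmt14_general v w ν hv hν Dm Dn hDn hDmn htang htrans c hc0 hc am an ham han
end

section
/- Let M ≥ 1, let w : Fin M → Fin M → ℝ be symmetric with w n k ≥ 0 for all n, k, and let d : Fin M → Fin M → ℝ be antisymmetric (d k n = −d n k). Define F : (Fin M → ℝ) → ℝ by F(a) = Σ_{n < k} w n k · (a k − a n − d n k)². Suppose the graph on Fin M with an edge between n and k whenever w n k > 0 is connected. Then for every c ∈ ℝ there exists a unique â : Fin M → ℝ with â 0 = c minimizing F over the set { a : Fin M → ℝ | a 0 = c }. -/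
/-!
The functional is a weighted linear least-squares residual: `F a = ‖L a - b‖²`, where `L` maps
`a` to the vector of weighted differences `√(w n k) (a k - a n)` over the edges `n < k`. A global
minimizer exists by the Hilbert projection theorem on the finite-dimensional range of `L`, and since
`L` kills constants it can be shifted to satisfy `a 0 = c`. Two minimizers have the same image
under `L` by the parallelogram law, so their difference is constant across every edge of positive
weight, hence constant on the connected graph, hence zero.
-/

theorem SimpleGraph.Walk.apply_eq_of_adj {V α : Type*} {G : SimpleGraph V} {f : V → α}
    (hf : ∀ u v, G.Adj u v → f u = f v) : ∀ {u v : V}, G.Walk u v → f u = f v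
  | _, _, .nil => rfl
  | _, _, .cons h p => (hf _ _ h).trans (p.apply_eq_of_adj hf)

theorem SimpleGraph.Preconnected.apply_eq_of_adj {V α : Type*} {G : SimpleGraph V}
    (hG : G.Preconnected) {f : V → α} (hf : ∀ u v, G.Adj u v → f u = f v) (u v : V) :
    f u = f v :=
  (hG u v).elim (·.apply_eq_of_adj hf)

section LeastSquares

variable {E F : Type*} [AddCommGroup E] [Module ℝ E] [NormedAddCommGroup F]
  [InnerProductSpace ℝ F]

theorem LinearMap.exists_forall_norm_sub_le [FiniteDimensional ℝ F] (L : E →ₗ[ℝ] F) (b : F) :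
    ∃ x, ∀ y, ‖L x - b‖ ≤ ‖L y - b‖ := by
  obtain ⟨_, ⟨x, rfl⟩, hx⟩ := Submodule.exists_norm_eq_iInf_of_complete_subspace
    (LinearMap.range L) (Submodule.complete_of_finiteDimensional _) b
  refine ⟨x, fun y => ?_⟩
  rw [norm_sub_rev, hx, norm_sub_rev]
  exact ciInf_le ⟨0, Set.forall_mem_range.2 fun _ => norm_nonneg _⟩
    (⟨L y, LinearMap.mem_range_self L y⟩ : (LinearMap.range L : Set F))

/-- By the parallelogram law, two distinct points of `range L` at minimal distance from `b`
would have a midpoint strictly closer to `b`. -/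
theorem LinearMap.map_eq_of_forall_norm_sub_le (L : E →ₗ[ℝ] F) (b : F) {x x' : E}
    (hx : ∀ y, ‖L x - b‖ ≤ ‖L y - b‖) (hx' : ∀ y, ‖L x' - b‖ ≤ ‖L y - b‖) : L x = L x' := by
  have hmid : (L x - b) + (L x' - b) = (2 : ℝ) • (L ((1 / 2 : ℝ) • (x + x')) - b) := by
    rw [map_smul, map_add]; module
  have hpar := parallelogram_law_with_norm ℝ (L x - b) (L x' - b)
  rw [hmid, norm_smul, Real.norm_two, sub_sub_sub_cancel_right] at hpar
  have hxx' := le_antisymm (hx x') (hx' x)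
  have hle := hx ((1 / 2 : ℝ) • (x + x'))
  rw [← sub_eq_zero, ← norm_eq_zero]
  nlinarith [norm_nonneg (L x - b), norm_nonneg (L x - L x')]

end LeastSquares

section WeightedIncidence

variable {ι : Type*} [LinearOrder ι]

noncomputable def edgeVector (w g : ι → ι → ℝ) : EuclideanSpace ℝ (ι × ι) :=
  WithLp.toLp 2 fun e => if e.1 < e.2 then √(w e.1 e.2) * g e.1 e.2 else 0

theorem edgeVector_sub (w g h : ι → ι → ℝ) :
    edgeVector w g - edgeVector w h = edgeVector w (g - h) := by
  ext e
  simp only [edgeVector, PiLp.sub_apply, Pi.sub_apply]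
  split_ifs <;> ring

theorem norm_edgeVector_sq [Fintype ι] {w : ι → ι → ℝ} (hw : ∀ n k, 0 ≤ w n k)
    (g : ι → ι → ℝ) :
    ‖edgeVector w g‖ ^ 2 = ∑ n, ∑ k, if n < k then w n k * g n k ^ 2 else 0 := by
  rw [EuclideanSpace.real_norm_sq_eq, Fintype.sum_prod_type]
  refine Fintype.sum_congr _ _ fun n => Fintype.sum_congr _ _ fun k => ?_
  simp only [edgeVector, PiLp.toLp_apply]
  split_ifs
  · rw [mul_pow, Real.sq_sqrt (hw n k)]
  · exact zero_pow two_ne_zero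

noncomputable def weightedIncidence (w : ι → ι → ℝ) :
    (ι → ℝ) →ₗ[ℝ] EuclideanSpace ℝ (ι × ι) where
  toFun a := edgeVector w fun n k => a k - a n
  map_add' a b := by
    ext e
    simp only [edgeVector, PiLp.add_apply, PiLp.toLp_apply, Pi.add_apply]
    split_ifs <;> ring
  map_smul' t a := by
    ext e
    simp only [edgeVector, PiLp.smul_apply, PiLp.toLp_apply, Pi.smul_apply, smul_eq_mul,
      RingHom.id_apply]
    split_ifs <;> ring

theorem weightedIncidence_apply (w : ι → ι → ℝ) (a : ι → ℝ) :
    weightedIncidence w a = edgeVector w fun n k => a k - a n := rfl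

theorem weightedIncidence_add_const (w : ι → ι → ℝ) (a : ι → ℝ) (t : ℝ) :
    weightedIncidence w (fun i => a i + t) = weightedIncidence w a := by
  simp only [weightedIncidence_apply, add_sub_add_right_eq_sub]

theorem apply_eq_of_weightedIncidence_eq_zero {w : ι → ι → ℝ} (hsymm : ∀ n k, w n k = w k n)
    {a : ι → ℝ} (ha : weightedIncidence w a = 0) {n k : ι}
    (hadj : (SimpleGraph.fromRel fun n k => 0 < w n k).Adj n k) : a n = a k := by
  have hlt : ∀ n k, n < k → 0 < w n k → a n = a k := fun n k hnk hw => by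
    have hcoord : √(w n k) * (a k - a n) = 0 := by
      simpa [weightedIncidence_apply, edgeVector, hnk] using congrArg (· (n, k)) ha
    exact (sub_eq_zero.1 ((mul_eq_zero.1 hcoord).resolve_left (Real.sqrt_pos.2 hw).ne')).symm
  obtain ⟨hne, hw⟩ := (SimpleGraph.fromRel_adj _ _ _).1 hadj
  rw [hsymm k n, or_self] at hw
  rcases hne.lt_or_gt with hnk | hkn
  · exact hlt n k hnk hw
  · exact (hlt k n hkn (hsymm n k ▸ hw)).symm

end WeightedIncidence

theorem stmt17_general (M : ℕ) (hM : 0 < M)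
    (w : Fin M → Fin M → ℝ) (hsymm : ∀ n k, w n k = w k n) (hnonneg : ∀ n k, 0 ≤ w n k)
    (d : Fin M → Fin M → ℝ)
    (F : (Fin M → ℝ) → ℝ)
    (hF : ∀ a : Fin M → ℝ,
      F a = ∑ n : Fin M, ∑ k : Fin M, if n < k then w n k * (a k - a n - d n k) ^ 2 else 0)
    (hconn : (SimpleGraph.fromRel fun n k => 0 < w n k).Connected) :
    ∀ c : ℝ, ∃! ahat : Fin M → ℝ, ahat ⟨0, hM⟩ = c ∧
      ∀ a : Fin M → ℝ, a ⟨0, hM⟩ = c → F ahat ≤ F a := by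
  intro c
  set z : Fin M := ⟨0, hM⟩
  set L := weightedIncidence w
  set b := edgeVector w d
  have hF_le_iff : ∀ a a', F a ≤ F a' ↔ ‖L a - b‖ ≤ ‖L a' - b‖ := fun a a' => by
    simp only [hF, L, b, weightedIncidence_apply, edgeVector_sub, ← norm_edgeVector_sq hnonneg]
    exact sq_le_sq₀ (norm_nonneg _) (norm_nonneg _)
  obtain ⟨x, hx⟩ := L.exists_forall_norm_sub_le b
  set ahat : Fin M → ℝ := fun i => x i + (c - x z)
  have hahat_min : ∀ a, F ahat ≤ F a := fun a =>
    (hF_le_iff _ _).2 (weightedIncidence_add_const w x _ ▸ hx a)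
  have hahat_z : ahat z = c := add_sub_cancel _ _
  refine ⟨ahat, ⟨hahat_z, fun a _ => hahat_min a⟩, fun y ⟨hy_z, hy_min⟩ => ?_⟩
  have hLy : L (y - ahat) = 0 := by
    rw [map_sub, sub_eq_zero]
    exact L.map_eq_of_forall_norm_sub_le b
      (fun a => (hF_le_iff _ _).1 ((hy_min ahat hahat_z).trans (hahat_min a)))
      (fun a => (hF_le_iff _ _).1 (hahat_min a))
  funext i
  have hi := hconn.preconnected.apply_eq_of_adj
    (fun _ _ => apply_eq_of_weightedIncidence_eq_zero hsymm hLy) i z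
  simpa [hy_z, hahat_z, sub_eq_zero] using hi

/-- uniqueness for the least-squares problem (17) of Section 4.2: for
symmetric nonnegative interface weights `w` and antisymmetric jump data `d`, if the graph
with an edge between `n` and `k` whenever `w n k > 0` is connected, then for every `c`
the functional `F(a) = Σ_{n<k} w n k (a k − a n − d n k)²` has a unique minimizer over
`{a | a 0 = c}`. -/
theorem stmt17 (M : ℕ) (hM : 0 < M)
    (w : Fin M → Fin M → ℝ) (hsymm : ∀ n k, w n k = w k n) (hnonneg : ∀ n k, 0 ≤ w n k)
    (d : Fin M → Fin M → ℝ) (hanti : ∀ n k, d k n = - d n k)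
    (F : (Fin M → ℝ) → ℝ)
    (hF : ∀ a : Fin M → ℝ,
      F a = ∑ n : Fin M, ∑ k : Fin M, if n < k then w n k * (a k - a n - d n k) ^ 2 else 0)
    (hconn : (SimpleGraph.fromRel fun n k => 0 < w n k).Connected) :
    ∀ c : ℝ, ∃! ahat : Fin M → ℝ, ahat ⟨0, hM⟩ = c ∧
      ∀ a : Fin M → ℝ, a ⟨0, hM⟩ = c → F ahat ≤ F a :=
  stmt17_general M hM w hsymm hnonneg d F hF hconn
end
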